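/- Let t ≥ 1 and let f : (Fin (2t) → ZMod 2) → ZMod 2 be a bent function (Nl(f) = 2^{2t−1} − 2^{t−1}) with f(0) = 0. Then the Cayley graph G_f is exactly one of the following two strongly regular graphs: either G_f satisfies IsSRGWith 2^{2t} (2^{2t−1} + 2^{t−1}) (2^{2t−2} + 2^{t−1}) (2^{2t−2} + 2^{t−1}), or G_f satisfies IsSRGWith 2^{2t} (2^{2t−1} − 2^{t−1}) (2^{2t−2} − 2^{t−1}) (2^{2t−2} − 2^{t−1}). -/

import Mathlib

/-- The nonlinearity of a Boolean function `f`: the minimum Hamming distance from `f`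
to an affine function `x ↦ a·x + c`. -/
noncomputable def nonlinearity {n : ℕ} (f : (Fin n → ZMod 2) → ZMod 2) : ℕ :=
  sInf {d : ℕ | ∃ (a : Fin n → ZMod 2) (c : ZMod 2),
    d = (Finset.univ.filter (fun x : Fin n → ZMod 2 =>
      f x ≠ (∑ i, a i * x i) + c)).card}

/-- The Cayley graph of `Z_2^n` with connection set the support of `f`:
distinct vertices `u`, `v` are adjacent iff `f (u + v) = 1`. -/
def cayleyGraph {n : ℕ} (f : (Fin n → ZMod 2) → ZMod 2) :
    SimpleGraph (Fin n → ZMod 2) :=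
  SimpleGraph.fromRel (fun u v => f (u + v) = 1)

instance {n : ℕ} (f : (Fin n → ZMod 2) → ZMod 2) :
    DecidableRel (cayleyGraph f).Adj := fun u v =>
  inferInstanceAs (Decidable (u ≠ v ∧ (f (u + v) = 1 ∨ f (v + u) = 1)))

/-!
Write `W(a) = ∑ₓ (-1)^(f x + a·x)` for the Walsh transform of `f` on `Z₂ⁿ`, `n = 2t`. The
distance from `f` to the affine function `a·x + c` is `(2ⁿ ∓ W(a))/2`, so
`Nl(f) = 2^(2t-1) - 2^(t-1)` gives `|W(a)| ≤ 2^t`, and Parseval's identity `∑ₐ W(a)² = 2²ⁿ`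
forces `W(a)² = 2ⁿ` for every `a`. The Wiener–Khinchin identity
`∑ₐ W(a)² (-1)^(a·w) = 2ⁿ ∑ₓ (-1)^(f x + f (x + w))` then makes the autocorrelation of `f`
vanish at every `w ≠ 0`. Expanding the indicator of `f (u + x) = f (v + x) = 1` in signs shows
that any two distinct vertices have `(2ⁿ - 2W(0))/4` common neighbours, adjacent or not, while
every vertex has degree `wt(f) = (2ⁿ - W(0))/2`; the two parameter sets are the two signs of
`W(0) = ±2^t`.
-/

open Finset Matrix

def boolSign : AddChar (ZMod 2) ℤ where
  toFun b := if b = 0 then 1 else -1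
  map_zero_eq_one' := rfl
  map_add_eq_mul' := by decide

@[simp] lemma boolSign_zero : boolSign 0 = 1 := rfl

@[simp] lemma boolSign_one : boolSign 1 = -1 := rfl

lemma boolSign_eq_one_iff {b : ZMod 2} : boolSign b = 1 ↔ b = 0 := by
  revert b; decide

lemma boolSign_eq_one_sub_two_mul (b : ZMod 2) :
    boolSign b = 1 - 2 * if b = 1 then 1 else 0 := by
  revert b; decide

lemma sum_boolSign {α : Type*} [Fintype α] (g : α → ZMod 2) :
    ∑ x, boolSign (g x) = Fintype.card α - 2 * #{x | g x = 1} := by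
  simp_rw [boolSign_eq_one_sub_two_mul, sum_sub_distrib, ← mul_sum, sum_boole]
  simp

lemma four_mul_card_filter_and {α : Type*} [Fintype α] (g h : α → ZMod 2) :
    4 * (#{x | g x = 1 ∧ h x = 1} : ℤ) = Fintype.card α - ∑ x, boolSign (g x)
      - ∑ x, boolSign (h x) + ∑ x, boolSign (g x + h x) := by
  have hpoint : ∀ p q : ZMod 2,
      (if p = 1 ∧ q = 1 then 4 else 0 : ℤ) =
        1 - boolSign p - boolSign q + boolSign (p + q) := by
    decide
  calc 4 * (#{x | g x = 1 ∧ h x = 1} : ℤ)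
      = ∑ x, if g x = 1 ∧ h x = 1 then 4 else 0 := by
        rw [sum_ite, sum_const_zero, add_zero, sum_const, nsmul_eq_mul, mul_comm]
    _ = ∑ x, (1 - boolSign (g x) - boolSign (h x) + boolSign (g x + h x)) := by simp_rw [hpoint]
    _ = _ := by simp only [sum_add_distrib, sum_sub_distrib, sum_const, card_univ, nsmul_one]

lemma fun_zmodTwo_add_self {ι : Type*} (u : ι → ZMod 2) : u + u = 0 :=
  funext fun i => CharTwo.add_self_eq_zero (u i)

section Walsh

variable {ι : Type*} [Fintype ι] [DecidableEq ι]

def walsh (f : (ι → ZMod 2) → ZMod 2) (a : ι → ZMod 2) : ℤ :=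
  ∑ x, boolSign (f x + a ⬝ᵥ x)

def autocorrelation (f : (ι → ZMod 2) → ZMod 2) (w : ι → ZMod 2) : ℤ :=
  ∑ x, boolSign (f x + f (x + w))

lemma card_fun_zmodTwo : Fintype.card (ι → ZMod 2) = 2 ^ Fintype.card ι := by
  simp

lemma walsh_zero (f : (ι → ZMod 2) → ZMod 2) : walsh f 0 = ∑ x, boolSign (f x) := by
  simp [walsh]

lemma two_mul_card_ne_affine (f : (ι → ZMod 2) → ZMod 2) (a : ι → ZMod 2) (c : ZMod 2) :
    2 * (#{x | f x ≠ a ⬝ᵥ x + c} : ℤ) = 2 ^ Fintype.card ι - boolSign c * walsh f a := by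
  have hne : ∀ p q : ZMod 2, p ≠ q ↔ p + q = 1 := by decide
  have hsign : ∀ x,
      boolSign c * boolSign (f x + a ⬝ᵥ x) = boolSign (f x + (a ⬝ᵥ x + c)) := fun x => by
    rw [← AddChar.map_add_eq_mul]
    ring_nf
  simp_rw [walsh, mul_sum, hsign, hne, sum_boolSign, card_fun_zmodTwo]
  push_cast
  ring

lemma sum_boolSign_dotProduct_add (x y : ι → ZMod 2) :
    ∑ a : ι → ZMod 2, boolSign (a ⬝ᵥ x + a ⬝ᵥ y) =
      if x = y then 2 ^ Fintype.card ι else 0 := by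
  classical
  let ψ : AddChar (ι → ZMod 2) ℤ :=
    boolSign.compAddMonoidHom (.mk' (· ⬝ᵥ (x + y)) fun a b => add_dotProduct a b _)
  have hψ : ∀ a, ψ a = boolSign (a ⬝ᵥ x + a ⬝ᵥ y) := fun a => by
    simp [ψ, dotProduct_add]
  have hψ0 : ψ = 0 ↔ x = y := by
    rw [AddChar.eq_zero_iff]
    constructor
    · intro h
      funext i
      have hi := h (Pi.single i 1)
      rw [hψ, single_dotProduct, single_dotProduct, one_mul, one_mul] at hi
      exact CharTwo.add_eq_zero.mp (boolSign_eq_one_iff.mp hi)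
    · rintro rfl a
      rw [hψ, CharTwo.add_self_eq_zero, AddChar.map_zero_eq_one]
  simp_rw [← hψ]
  rw [AddChar.sum_eq_ite, card_fun_zmodTwo]
  simp [hψ0]

lemma sum_walsh_sq_mul_boolSign (f : (ι → ZMod 2) → ZMod 2) (w : ι → ZMod 2) :
    ∑ a, walsh f a ^ 2 * boolSign (a ⬝ᵥ w) = 2 ^ Fintype.card ι * autocorrelation f w := by
  have expand : ∀ a, walsh f a ^ 2 * boolSign (a ⬝ᵥ w) =
      ∑ x, ∑ y, boolSign (f x + f y) * boolSign (a ⬝ᵥ (x + w) + a ⬝ᵥ y) := by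
    intro a
    rw [walsh, sq, sum_mul_sum, sum_mul]
    refine sum_congr rfl fun x _ => ?_
    rw [sum_mul]
    refine sum_congr rfl fun y _ => ?_
    simp only [← AddChar.map_add_eq_mul, dotProduct_add]
    ring_nf
  calc ∑ a, walsh f a ^ 2 * boolSign (a ⬝ᵥ w)
      = ∑ x, ∑ y, boolSign (f x + f y) * ∑ a, boolSign (a ⬝ᵥ (x + w) + a ⬝ᵥ y) := by
        simp_rw [expand, mul_sum]
        rw [sum_comm]
        exact sum_congr rfl fun x _ => sum_comm
    _ = 2 ^ Fintype.card ι * autocorrelation f w := by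
        simp_rw [sum_boolSign_dotProduct_add, mul_ite, mul_zero, sum_ite_eq, if_pos (mem_univ _),
          autocorrelation, mul_sum, mul_comm]

lemma autocorrelation_zero (f : (ι → ZMod 2) → ZMod 2) :
    autocorrelation f 0 = 2 ^ Fintype.card ι := by
  simp [autocorrelation, CharTwo.add_self_eq_zero]

lemma sum_walsh_sq (f : (ι → ZMod 2) → ZMod 2) :
    ∑ a, walsh f a ^ 2 = 2 ^ Fintype.card ι * 2 ^ Fintype.card ι := by
  simpa [autocorrelation_zero] using sum_walsh_sq_mul_boolSign f 0

lemma walsh_sq_eq_of_forall_walsh_sq_le {f : (ι → ZMod 2) → ZMod 2}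
    (h : ∀ a, walsh f a ^ 2 ≤ 2 ^ Fintype.card ι) (a : ι → ZMod 2) :
    walsh f a ^ 2 = 2 ^ Fintype.card ι := by
  have hsum : ∑ b, (2 ^ Fintype.card ι - walsh f b ^ 2) = 0 := by
    rw [sum_sub_distrib, sum_walsh_sq, sum_const, card_univ, card_fun_zmodTwo, nsmul_eq_mul]
    push_cast
    ring
  have := (sum_eq_zero_iff_of_nonneg fun b _ => sub_nonneg.mpr (h b)).mp hsum a (mem_univ a)
  linarith

lemma autocorrelation_eq_zero {f : (ι → ZMod 2) → ZMod 2}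
    (hW : ∀ a, walsh f a ^ 2 = 2 ^ Fintype.card ι) {w : ι → ZMod 2} (hw : w ≠ 0) :
    autocorrelation f w = 0 := by
  have h := sum_walsh_sq_mul_boolSign f w
  have horth : ∑ a : ι → ZMod 2, boolSign (a ⬝ᵥ w) = 0 := by
    simpa [hw] using sum_boolSign_dotProduct_add w 0
  simp_rw [hW, ← mul_sum, horth, mul_zero] at h
  exact (mul_eq_zero.mp h.symm).resolve_left (by positivity)

end Walsh

lemma abs_walsh_le {n : ℕ} (f : (Fin n → ZMod 2) → ZMod 2) (a : Fin n → ZMod 2) :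
    |walsh f a| ≤ 2 ^ n - 2 * nonlinearity f := by
  have hdist : ∀ c, 2 * (nonlinearity f : ℤ) ≤ 2 ^ n - boolSign c * walsh f a := fun c => by
    have hle : nonlinearity f ≤ #{x | f x ≠ a ⬝ᵥ x + c} := Nat.sInf_le ⟨a, c, rfl⟩
    have hcard := two_mul_card_ne_affine f a c
    rw [Fintype.card_fin] at hcard
    rw [← hcard]
    exact_mod_cast Nat.mul_le_mul_left 2 hle
  have h0 := hdist 0
  have h1 := hdist 1
  simp only [boolSign_zero, boolSign_one, one_mul, neg_one_mul, sub_neg_eq_add] at h0 h1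
  exact abs_le.mpr ⟨by linarith, by linarith⟩

lemma walsh_sq_eq_of_bent {t : ℕ} (ht : 1 ≤ t) {f : (Fin (2 * t) → ZMod 2) → ZMod 2}
    (hbent : nonlinearity f = 2 ^ (2 * t - 1) - 2 ^ (t - 1)) (a : Fin (2 * t) → ZMod 2) :
    walsh f a ^ 2 = 2 ^ (2 * t) := by
  obtain ⟨m, rfl⟩ : ∃ m, t = m + 1 := ⟨t - 1, by omega⟩
  have hle : 2 ^ m ≤ 2 ^ (2 * m + 1) := Nat.pow_le_pow_right two_pos (by omega)
  have hgap : (2 : ℤ) ^ (2 * (m + 1)) - 2 * nonlinearity f = 2 ^ (m + 1) := by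
    rw [hbent, show 2 * (m + 1) - 1 = 2 * m + 1 by omega, Nat.add_sub_cancel, Nat.cast_sub hle]
    push_cast
    ring
  have hbound : ∀ b, walsh f b ^ 2 ≤ 2 ^ Fintype.card (Fin (2 * (m + 1))) := fun b =>
    calc walsh f b ^ 2 = |walsh f b| ^ 2 := (sq_abs _).symm
      _ ≤ (2 ^ (m + 1)) ^ 2 := pow_le_pow_left₀ (abs_nonneg _) (hgap ▸ abs_walsh_le f b) 2
      _ = 2 ^ Fintype.card (Fin (2 * (m + 1))) := by rw [Fintype.card_fin]; ring
  simpa using walsh_sq_eq_of_forall_walsh_sq_le hbound a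

section CayleyGraph

variable {n : ℕ} {f : (Fin n → ZMod 2) → ZMod 2}

lemma cayleyGraph_adj_iff (h0 : f 0 = 0) {u v : Fin n → ZMod 2} :
    (cayleyGraph f).Adj u v ↔ f (u + v) = 1 := by
  refine ⟨fun ⟨_, h⟩ => h.elim id fun h => add_comm u v ▸ h, fun h => ⟨?_, .inl h⟩⟩
  rintro rfl
  rw [fun_zmodTwo_add_self, h0] at h
  exact zero_ne_one h

lemma cayleyGraph_degree (h0 : f 0 = 0) (u : Fin n → ZMod 2) :
    (cayleyGraph f).degree u = #{x | f x = 1} := by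
  rw [← SimpleGraph.card_neighborFinset_eq_degree]
  refine card_equiv (Equiv.addLeft u) fun x => ?_
  rw [SimpleGraph.mem_neighborFinset, cayleyGraph_adj_iff h0, mem_filter]
  simp

lemma four_mul_card_commonNeighbors (h0 : f 0 = 0) (u v : Fin n → ZMod 2) :
    4 * (Fintype.card ((cayleyGraph f).commonNeighbors u v) : ℤ) =
      2 ^ n - 2 * walsh f 0 + autocorrelation f (u + v) := by
  have hcard : Fintype.card ((cayleyGraph f).commonNeighbors u v) =
      #{x | f (u + x) = 1 ∧ f (v + x) = 1} := by
    rw [← Set.toFinset_card]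
    congr 1
    ext x
    simp [SimpleGraph.mem_commonNeighbors, cayleyGraph_adj_iff h0]
  have hshift : ∀ w : Fin n → ZMod 2, ∑ x, boolSign (f (w + x)) = walsh f 0 := fun w => by
    rw [walsh_zero]
    exact Fintype.sum_equiv (Equiv.addLeft w) _ _ fun _ => rfl
  have hauto : ∑ x, boolSign (f (u + x) + f (v + x)) = autocorrelation f (u + v) := by
    refine Fintype.sum_equiv (Equiv.addLeft u) _ _ fun x => ?_
    have hcancel : u + x + (u + v) = v + x := by
      rw [add_add_add_comm, fun_zmodTwo_add_self, zero_add, add_comm]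
    simp [hcancel]
  rw [hcard, four_mul_card_filter_and, hshift, hshift, hauto, card_fun_zmodTwo, Fintype.card_fin]
  push_cast
  ring

lemma cayleyGraph_isSRGWith (h0 : f 0 = 0) (hW : ∀ a, walsh f a ^ 2 = 2 ^ n) {k ℓ : ℕ}
    (hk : 2 * (k : ℤ) = 2 ^ n - walsh f 0) (hℓ : 4 * (ℓ : ℤ) = 4 * k - 2 ^ n) :
    (cayleyGraph f).IsSRGWith (2 ^ n) k ℓ ℓ := by
  have hcommon : ∀ u v, u ≠ v → Fintype.card ((cayleyGraph f).commonNeighbors u v) = ℓ := by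
    intro u v huv
    have hW' : ∀ a, walsh f a ^ 2 = 2 ^ Fintype.card (Fin n) := by simpa using hW
    have hauto := autocorrelation_eq_zero hW' (w := u + v) fun h => huv <|
      (add_eq_zero_iff_eq_neg.mp h).trans (neg_eq_of_add_eq_zero_left (fun_zmodTwo_add_self v))
    have := four_mul_card_commonNeighbors h0 u v
    rw [hauto] at this
    exact_mod_cast (by linarith : (Fintype.card ((cayleyGraph f).commonNeighbors u v) : ℤ) = ℓ)
  refine ⟨by simp, fun u => ?_, fun u v h => hcommon u v h.ne, fun u v huv _ => hcommon u v huv⟩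
  have hwt := sum_boolSign f
  rw [← walsh_zero, card_fun_zmodTwo, Fintype.card_fin] at hwt
  rw [cayleyGraph_degree h0]
  exact_mod_cast (by push_cast at hwt; linarith : (#{x | f x = 1} : ℤ) = k)

end CayleyGraph

theorem bent_cayleyGraph_srg_parameters (t : ℕ) (ht : 1 ≤ t)
    (f : (Fin (2 * t) → ZMod 2) → ZMod 2) (h0 : f 0 = 0)
    (hbent : nonlinearity f = 2 ^ (2 * t - 1) - 2 ^ (t - 1)) :
    Xor'
      ((cayleyGraph f).IsSRGWith (2 ^ (2 * t)) (2 ^ (2 * t - 1) + 2 ^ (t - 1))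
        (2 ^ (2 * t - 2) + 2 ^ (t - 1)) (2 ^ (2 * t - 2) + 2 ^ (t - 1)))
      ((cayleyGraph f).IsSRGWith (2 ^ (2 * t)) (2 ^ (2 * t - 1) - 2 ^ (t - 1))
        (2 ^ (2 * t - 2) - 2 ^ (t - 1)) (2 ^ (2 * t - 2) - 2 ^ (t - 1))) := by
  have hW := walsh_sq_eq_of_bent ht hbent
  obtain ⟨m, rfl⟩ : ∃ m, t = m + 1 := ⟨t - 1, by omega⟩
  simp only [show 2 * (m + 1) - 1 = 2 * m + 1 by omega, show 2 * (m + 1) - 2 = 2 * m by omega,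
    Nat.add_sub_cancel]
  have hpos : 0 < 2 ^ m := by positivity
  have hle : 2 ^ m ≤ 2 ^ (2 * m) := Nat.pow_le_pow_right two_pos (by omega)
  have hle' : 2 ^ m ≤ 2 ^ (2 * m + 1) := Nat.pow_le_pow_right two_pos (by omega)
  have hdeg : 2 ^ (2 * m + 1) + 2 ^ m ≠ 2 ^ (2 * m + 1) - 2 ^ m := by omega
  have hW0 : walsh f 0 = 2 ^ (m + 1) ∨ walsh f 0 = -2 ^ (m + 1) :=
    sq_eq_sq_iff_eq_or_eq_neg.mp (by rw [hW 0]; ring)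
  rcases hW0 with hW0 | hW0
  · have hsrg := cayleyGraph_isSRGWith h0 hW
      (k := 2 ^ (2 * m + 1) - 2 ^ m) (ℓ := 2 ^ (2 * m) - 2 ^ m)
      (by push_cast [Nat.cast_sub hle']; rw [hW0]; ring)
      (by push_cast [Nat.cast_sub hle, Nat.cast_sub hle']; ring)
    exact Or.inr ⟨hsrg, fun h => hdeg ((h.regular 0).symm.trans (hsrg.regular 0))⟩
  · have hsrg := cayleyGraph_isSRGWith h0 hW
      (k := 2 ^ (2 * m + 1) + 2 ^ m) (ℓ := 2 ^ (2 * m) + 2 ^ m)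
      (by push_cast; rw [hW0]; ring)
      (by push_cast; ring)
    exact Or.inl ⟨hsrg, fun h => hdeg ((hsrg.regular 0).symm.trans (h.regular 0))⟩
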